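/- arXiv:gr-qc/9903098 — 3 statements merged into one kernel-verified Lean document; each statement's English description precedes it below -/
import Mathlib

section
/- Let K be a convex subset of ℝⁿ. The function x ↦ dist(x, ℝⁿ \ K) is concave on K. -/
/-!
If `x, y ∈ s` have distances `r, t` to `sᶜ`, then for every unit-ball vector `u` the points
`x + r • u` and `y + t • u` lie in `s`, and their convex combination with weights `a, b` is
`a • x + b • y + (a * r + b * t) • u`. Convexity of `s` therefore puts the whole open ball of
radius `a * r + b * t` about `a • x + b • y` inside `s`.
-/

open Metric

variable {E : Type*} [NormedAddCommGroup E] [NormedSpace ℝ E] {s : Set E}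

lemma add_infDist_compl_smul_mem {x u : E} (hx : x ∈ s) (hu : ‖u‖ < 1) :
    x + infDist x sᶜ • u ∈ s := by
  rcases (infDist_nonneg (x := x) (s := sᶜ)).eq_or_lt with h₀ | h₀
  · simpa [← h₀] using hx
  apply ball_infDist_compl_subset
  rw [mem_ball, dist_self_add_left, norm_smul, Real.norm_of_nonneg h₀.le]
  exact mul_lt_of_lt_one_right h₀ hu

theorem Convex.concaveOn_infDist_compl (hs : Convex ℝ s) : ConcaveOn ℝ s (infDist · sᶜ) := by
  refine ⟨hs, fun x hx y hy a b ha hb hab => ?_⟩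
  rcases sᶜ.eq_empty_or_nonempty with hsc | hsc
  · simp [hsc]
  set z := a • x + b • y
  set L := a • infDist x sᶜ + b • infDist y sᶜ
  refine (le_infDist hsc).2 fun w hw => not_lt.1 fun hlt => hw ?_
  have hL : 0 < L := dist_nonneg.trans_lt hlt
  set u := L⁻¹ • (w - z)
  have hu : ‖u‖ < 1 := by
    rw [norm_smul, norm_inv, Real.norm_of_nonneg hL.le, ← dist_eq_norm, dist_comm]
    exact (inv_mul_lt_one₀ hL).2 hlt
  have hw : w = a • (x + infDist x sᶜ • u) + b • (y + infDist y sᶜ • u) := by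
    have hLu : L • u = w - z := smul_inv_smul₀ hL.ne' _
    calc w = z + L • u := by rw [hLu, add_sub_cancel]
      _ = _ := by simp only [z, L, smul_add, add_smul, smul_smul, smul_eq_mul]; abel
  rw [hw]
  exact hs (add_infDist_compl_smul_mem hx hu) (add_infDist_compl_smul_mem hy hu) ha hb hab

/-- The distance to the complement of a convex set is concave on the set. -/
theorem concaveOn_infDist_compl (n : ℕ)
    (K : Set (EuclideanSpace ℝ (Fin n))) (hconv : Convex ℝ K) :
    ConcaveOn ℝ K (fun x => Metric.infDist x Kᶜ) :=
  hconv.concaveOn_infDist_compl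
end

section
/- Let C be a nonempty closed subset of ℝⁿ and x ∉ C. If there exist two distinct points c₁ ≠ c₂ in C with ‖x − c₁‖ = ‖x − c₂‖ = dist(x, C), then the function y ↦ dist(y, C) is not differentiable at x. -/
/-!
Along the segment from `x` to a nearest point `c`, the distance to `C` decreases at unit rate, so a
derivative `L` of the distance function at `x` satisfies `L (c - x) ≤ -d`, where `d = dist(x, C)`.
Adding this for `c₁` and `c₂` and using `‖L‖ ≤ 1` (the distance function is 1-Lipschitz) gives
`2 d ≤ ‖(c₁ - x) + (c₂ - x)‖`, which strict convexity of the norm forbids for the distinct vectors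
`c₁ - x` and `c₂ - x` of common norm `d`.
-/

open Filter Topology Metric

theorem HasLineDerivAt.le_of_eventually_le {E : Type*} [AddCommGroup E] [Module ℝ E]
    {f : E → ℝ} {f' a : ℝ} {x v : E} (hf : HasLineDerivAt ℝ f f' x v)
    (h : ∀ᶠ t in 𝓝[>] (0 : ℝ), f (x + t • v) ≤ f x + t * a) : f' ≤ a := by
  refine le_of_tendsto hf.tendsto_slope_zero_right ?_
  filter_upwards [h, self_mem_nhdsWithin] with t hle (ht : 0 < t)
  rw [smul_eq_mul, inv_mul_le_iff₀ ht]
  linarith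

theorem Metric.infDist_add_smul_sub_le {E : Type*} [NormedAddCommGroup E] [NormedSpace ℝ E]
    {s : Set E} {x c : E} {t : ℝ} (hc : c ∈ s) (ht : t ≤ 1) :
    infDist (x + t • (c - x)) s ≤ dist x c - t * dist x c :=
  calc infDist (x + t • (c - x)) s ≤ dist (AffineMap.lineMap x c t) c := by
        rw [AffineMap.lineMap_apply_module', add_comm]
        exact infDist_le_dist_of_mem hc
    _ = dist x c - t * dist x c := by
        rw [dist_lineMap_right, Real.norm_of_nonneg (sub_nonneg.2 ht)]
        ring

theorem Metric.apply_sub_le_neg_infDist_of_hasFDerivAt {E : Type*} [NormedAddCommGroup E]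
    [NormedSpace ℝ E] {s : Set E} {x c : E} {L : E →L[ℝ] ℝ}
    (hL : HasFDerivAt (infDist · s) L x) (hc : c ∈ s) (hxc : dist x c = infDist x s) :
    L (c - x) ≤ -infDist x s := by
  refine (hL.hasLineDerivAt (c - x)).le_of_eventually_le ?_
  filter_upwards [Ioo_mem_nhdsGT one_pos] with t ⟨_, ht⟩
  simpa [← hxc, sub_eq_add_neg] using infDist_add_smul_sub_le (x := x) hc ht.le

theorem not_differentiable_of_two_nearest_general (n : ℕ)
    (C : Set (EuclideanSpace ℝ (Fin n)))
    (x : EuclideanSpace ℝ (Fin n))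
    (c₁ c₂ : EuclideanSpace ℝ (Fin n)) (hc₁ : c₁ ∈ C) (hc₂ : c₂ ∈ C)
    (hne' : c₁ ≠ c₂)
    (h₁ : dist x c₁ = Metric.infDist x C)
    (h₂ : dist x c₂ = Metric.infDist x C) :
    ¬ DifferentiableAt ℝ (fun y => Metric.infDist y C) x := by
  intro hdiff
  have hL := hdiff.hasFDerivAt
  set L := fderiv ℝ (infDist · C) x
  have hv₁ := apply_sub_le_neg_infDist_of_hasFDerivAt hL hc₁ h₁
  have hv₂ := apply_sub_le_neg_infDist_of_hasFDerivAt hL hc₂ h₂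
  have hlip : ‖L ((c₁ - x) + (c₂ - x))‖ ≤ 1 * ‖(c₁ - x) + (c₂ - x)‖ :=
    (hL.hasLineDerivAt _).le_of_lipschitz (lipschitz_infDist_pt C)
  have hnorm₁ : ‖c₁ - x‖ = infDist x C := by rw [← dist_eq_norm', h₁]
  have hnorm₂ : ‖c₂ - x‖ = infDist x C := by rw [← dist_eq_norm', h₂]
  have hstrict : ‖(c₁ - x) + (c₂ - x)‖ < ‖c₁ - x‖ + ‖c₂ - x‖ :=
    norm_add_lt_of_not_sameRay fun hray =>
      hne' (sub_left_inj.1 (hray.eq_of_norm_eq (hnorm₁.trans hnorm₂.symm)))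
  rw [map_add, Real.norm_eq_abs] at hlip
  linarith [neg_abs_le (L (c₁ - x) + L (c₂ - x))]

/-- If x has two distinct nearest points in a closed set C, then the distance
function to C is not differentiable at x. -/
theorem not_differentiable_of_two_nearest (n : ℕ)
    (C : Set (EuclideanSpace ℝ (Fin n))) (hC : IsClosed C) (hne : C.Nonempty)
    (x : EuclideanSpace ℝ (Fin n)) (hx : x ∉ C)
    (c₁ c₂ : EuclideanSpace ℝ (Fin n)) (hc₁ : c₁ ∈ C) (hc₂ : c₂ ∈ C)
    (hne' : c₁ ≠ c₂)
    (h₁ : dist x c₁ = Metric.infDist x C)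
    (h₂ : dist x c₂ = Metric.infDist x C) :
    ¬ DifferentiableAt ℝ (fun y => Metric.infDist y C) x :=
  not_differentiable_of_two_nearest_general n C x c₁ c₂ hc₁ hc₂ hne' h₁ h₂
end

section
/- Let C be a nonempty closed subset of ℝⁿ and x ∉ C. If x has a unique nearest point c in C, i.e. {c ∈ C : ‖x − c‖ = dist(x,C)} is a singleton, then the function y ↦ dist(y, C) is differentiable at x, with gradient (x − c)/‖x − c‖. -/
open Metric Filter Asymptotics
open scoped RealInnerProductSpace Topology

section Aux

variable {E : Type*} [NormedAddCommGroup E] [InnerProductSpace ℝ E]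

private lemma norm_add_le_quad (a h : E) (ha : a ≠ 0) :
    ‖a + h‖ ≤ ‖a‖ + ⟪a, h⟫ / ‖a‖ + ‖h‖ ^ 2 / (2 * ‖a‖) := by
  have hs : (0:ℝ) < ‖a‖ := norm_pos_iff.mpr ha
  have hsq : ‖a + h‖ ^ 2 = ‖a‖ ^ 2 + 2 * ⟪a, h⟫ + ‖h‖ ^ 2 := norm_add_sq_real a h
  have hform : ‖a‖ + ⟪a, h⟫ / ‖a‖ + ‖h‖ ^ 2 / (2 * ‖a‖)
      = (2 * ‖a‖ ^ 2 + 2 * ⟪a, h⟫ + ‖h‖ ^ 2) / (2 * ‖a‖) := by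
    field_simp
  rw [hform, le_div_iff₀ (by positivity)]
  nlinarith [sq_nonneg (‖a + h‖ - ‖a‖)]

private lemma unit_sub_unit (a b : E) (ha : a ≠ 0) (hb : b ≠ 0) :
    ‖‖a‖⁻¹ • a - ‖b‖⁻¹ • b‖ ≤ 2 * ‖a - b‖ / ‖a‖ := by
  have hsa : (0:ℝ) < ‖a‖ := norm_pos_iff.mpr ha
  have hsb : (0:ℝ) < ‖b‖ := norm_pos_iff.mpr hb
  have hdecomp : ‖a‖⁻¹ • a - ‖b‖⁻¹ • b = ‖a‖⁻¹ • (a - b) + (‖a‖⁻¹ - ‖b‖⁻¹) • b := by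
    module
  rw [hdecomp]
  have h1 : ‖‖a‖⁻¹ • (a - b)‖ = ‖a - b‖ / ‖a‖ := by
    rw [norm_smul, norm_inv, norm_norm]; ring
  have h2 : ‖(‖a‖⁻¹ - ‖b‖⁻¹) • b‖ ≤ ‖a - b‖ / ‖a‖ := by
    rw [norm_smul, Real.norm_eq_abs]
    have he : ‖a‖⁻¹ - ‖b‖⁻¹ = (‖b‖ - ‖a‖) / (‖a‖ * ‖b‖) := by field_simp
    rw [he, abs_div, abs_of_pos (mul_pos hsa hsb)]
    have habs : |‖b‖ - ‖a‖| ≤ ‖a - b‖ :=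
      (abs_norm_sub_norm_le b a).trans (norm_sub_rev b a).le
    have heq : |‖b‖ - ‖a‖| / (‖a‖ * ‖b‖) * ‖b‖ = |‖b‖ - ‖a‖| / ‖a‖ := by
      field_simp
    rw [heq]
    gcongr
  calc ‖‖a‖⁻¹ • (a - b) + (‖a‖⁻¹ - ‖b‖⁻¹) • b‖
      ≤ ‖‖a‖⁻¹ • (a - b)‖ + ‖(‖a‖⁻¹ - ‖b‖⁻¹) • b‖ := norm_add_le _ _
    _ ≤ ‖a - b‖ / ‖a‖ + ‖a - b‖ / ‖a‖ := by rw [h1]; linarith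
    _ = 2 * ‖a - b‖ / ‖a‖ := by ring

end Aux

/-- If x has a unique nearest point c in a closed set C, then the distance
function to C is differentiable at x with gradient (x − c)/‖x − c‖. -/
theorem differentiable_of_unique_nearest (n : ℕ)
    (C : Set (EuclideanSpace ℝ (Fin n))) (hC : IsClosed C) (hne : C.Nonempty)
    (x : EuclideanSpace ℝ (Fin n)) (hx : x ∉ C)
    (c : EuclideanSpace ℝ (Fin n))
    (huniq : {c' ∈ C | dist x c' = Metric.infDist x C} = {c}) :
    HasGradientAt (fun y => Metric.infDist y C) (‖x - c‖⁻¹ • (x - c)) x := by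
  have hcmem : c ∈ {c' ∈ C | dist x c' = Metric.infDist x C} := by
    rw [huniq]; rfl
  obtain ⟨hcC, hcd⟩ := hcmem
  have hd0 : 0 < infDist x C := (hC.notMem_iff_infDist_pos hne).mp hx
  have hdist : infDist x C = ‖x - c‖ := by rw [← hcd, dist_eq_norm]
  have hnxc : (0:ℝ) < ‖x - c‖ := hdist ▸ hd0
  have hxc : x - c ≠ 0 := norm_pos_iff.mp hnxc
  -- continuity of the nearest point
  have key : ∀ ε > 0, ∃ δ > 0, ∀ y c', dist y x < δ → c' ∈ C →
      dist y c' = infDist y C → dist c' c < ε := by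
    by_contra hcon
    push_neg at hcon
    obtain ⟨ε, hε, hcon⟩ := hcon
    choose y cy h1 h2 h3 h4 using fun k : ℕ =>
      hcon (1 / ((k : ℝ) + 1)) (by positivity)
    have hyx : Tendsto y atTop (𝓝 x) := by
      rw [tendsto_iff_dist_tendsto_zero]
      refine squeeze_zero (fun k => dist_nonneg) (fun k => (h1 k).le)
        tendsto_one_div_add_atTop_nhds_zero_nat
    have hbd : ∀ k, cy k ∈ C ∩ closedBall x (infDist x C + 2) := by
      intro k
      refine ⟨h2 k, ?_⟩
      rw [mem_closedBall]
      have hk1 : dist (y k) x ≤ 1 := by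
        have : 1 / ((k : ℝ) + 1) ≤ 1 := by
          rw [div_le_one (by positivity)]
          linarith [(Nat.cast_nonneg k : (0:ℝ) ≤ k)]
        linarith [h1 k]
      have : dist (cy k) x ≤ dist (cy k) (y k) + dist (y k) x := dist_triangle _ _ _
      have h5 : dist (cy k) (y k) = infDist (y k) C := by rw [dist_comm]; exact h3 k
      have h6 : infDist (y k) C ≤ infDist x C + dist (y k) x :=
        infDist_le_infDist_add_dist
      linarith
    have hK : IsCompact (C ∩ closedBall x (infDist x C + 2)) :=
      (isCompact_closedBall x _).inter_left hC
    obtain ⟨cs, hcs, φ, hφ, hconv⟩ := hK.tendsto_subseq hbd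
    have hyφ : Tendsto (y ∘ φ) atTop (𝓝 x) := hyx.comp hφ.tendsto_atTop
    have t1 : Tendsto (fun k => dist (y (φ k)) (cy (φ k))) atTop (𝓝 (dist x cs)) :=
      hyφ.dist hconv
    have t2 : Tendsto (fun k => dist (y (φ k)) (cy (φ k))) atTop (𝓝 (infDist x C)) := by
      have := ((continuous_infDist_pt C).tendsto x).comp hyφ
      refine this.congr fun k => (h3 (φ k)).symm
    have hdcs : dist x cs = infDist x C := tendsto_nhds_unique t1 t2
    have hcsmem : cs ∈ {c' ∈ C | dist x c' = infDist x C} := ⟨hcs.1, hdcs⟩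
    rw [huniq] at hcsmem
    have : ε ≤ dist cs c := by
      refine ge_of_tendsto (hconv.dist tendsto_const_nhds) ?_
      exact Eventually.of_forall fun k => h4 (φ k)
    rw [hcsmem] at this
    simp at this
    linarith
  -- the little-o estimate
  rw [hasGradientAt_iff_isLittleO, isLittleO_iff]
  intro ε hε
  obtain ⟨δ₁, hδ₁, hnear⟩ := key (ε * ‖x - c‖ / 4) (by positivity)
  rw [Metric.eventually_nhds_iff]
  refine ⟨min δ₁ (ε * ‖x - c‖), lt_min hδ₁ (by positivity), fun y hy => ?_⟩
  have hy1 : dist y x < δ₁ := hy.trans_le (min_le_left _ _)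
  have hy2 : ‖y - x‖ < ε * ‖x - c‖ := by
    rw [← dist_eq_norm]; exact hy.trans_le (min_le_right _ _)
  obtain ⟨c', hc'C, hc'd⟩ := hC.exists_infDist_eq_dist hne y
  have hxc'n : infDist x C ≤ ‖x - c'‖ := by
    rw [← dist_eq_norm]; exact infDist_le_dist_of_mem hc'C
  have hnxc' : (0:ℝ) < ‖x - c'‖ := lt_of_lt_of_le hd0 hxc'n
  have hxc' : x - c' ≠ 0 := norm_pos_iff.mp hnxc'
  have hcc' : dist c' c < ε * ‖x - c‖ / 4 := hnear y c' hy1 hc'C hc'd.symm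
  set v := ‖x - c‖⁻¹ • (x - c) with hv
  set u := ‖x - c'‖⁻¹ • (x - c') with hu
  -- upper bound
  have hupper : infDist y C - infDist x C - ⟪v, y - x⟫ ≤ (ε / 2) * ‖y - x‖ := by
    have h1 : infDist y C ≤ ‖y - c‖ := by
      rw [← dist_eq_norm]; exact infDist_le_dist_of_mem hcC
    have h2 : y - c = (x - c) + (y - x) := by abel
    have h3 : ‖y - c‖ ≤ ‖x - c‖ + ⟪x - c, y - x⟫ / ‖x - c‖ + ‖y - x‖ ^ 2 / (2 * ‖x - c‖) := by
      rw [h2]; exact norm_add_le_quad _ _ hxc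
    have h4 : ⟪v, y - x⟫ = ⟪x - c, y - x⟫ / ‖x - c‖ := by
      rw [hv, real_inner_smul_left]; ring
    have h5 : ‖y - x‖ ^ 2 / (2 * ‖x - c‖) ≤ (ε / 2) * ‖y - x‖ := by
      rw [div_le_iff₀ (by positivity), pow_two]
      have := norm_nonneg (y - x)
      nlinarith
    rw [h4, hdist]
    linarith
  -- lower bound
  have hlower : -(ε / 2) * ‖y - x‖ ≤ infDist y C - infDist x C - ⟪v, y - x⟫ := by
    have h1 : infDist y C = ‖y - c'‖ := by rw [hc'd, dist_eq_norm]
    have h2 : ⟪u, y - c'⟫ ≤ ‖y - c'‖ := by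
      calc ⟪u, y - c'⟫ ≤ ‖u‖ * ‖y - c'‖ := real_inner_le_norm _ _
        _ ≤ 1 * ‖y - c'‖ := by
            apply mul_le_mul_of_nonneg_right _ (norm_nonneg _)
            rw [hu, norm_smul, norm_inv, norm_norm, inv_mul_cancel₀ hnxc'.ne']
        _ = ‖y - c'‖ := one_mul _
    have h3 : ⟪u, y - c'⟫ = ⟪u, y - x⟫ + ‖x - c'‖ := by
      have hd : y - c' = (y - x) + (x - c') := by abel
      rw [hd, inner_add_right]
      congr 1
      rw [hu, real_inner_smul_left, real_inner_self_eq_norm_mul_norm]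
      field_simp
    have h4 : ⟪u - v, y - x⟫ ≥ -(‖u - v‖ * ‖y - x‖) := by
      have := abs_real_inner_le_norm (u - v) (y - x)
      have := neg_abs_le ⟪u - v, y - x⟫
      linarith
    have h5 : ‖u - v‖ ≤ ε / 2 := by
      have hb : ‖u - v‖ ≤ 2 * ‖(x - c') - (x - c)‖ / ‖x - c'‖ :=
        unit_sub_unit _ _ hxc' hxc
      have he : (x - c') - (x - c) = c - c' := by abel
      have hcc2 : ‖c - c'‖ < ε * ‖x - c‖ / 4 := by
        rw [← dist_eq_norm, dist_comm]; exact hcc'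
      have hden : ‖x - c‖ ≤ ‖x - c'‖ := hdist ▸ hxc'n
      calc ‖u - v‖ ≤ 2 * ‖c - c'‖ / ‖x - c'‖ := by rwa [he] at hb
        _ ≤ 2 * (ε * ‖x - c‖ / 4) / ‖x - c‖ := by
            apply div_le_div₀ (by positivity) _ hnxc hden
            nlinarith
        _ = ε / 2 := by field_simp; ring
    have h6 : ⟪u - v, y - x⟫ = ⟪u, y - x⟫ - ⟪v, y - x⟫ := inner_sub_left _ _ _
    have h7 : -(ε / 2) * ‖y - x‖ ≤ ⟪u - v, y - x⟫ := by
      have hnn := norm_nonneg (y - x)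
      nlinarith
    have h8 : infDist x C ≤ ‖x - c'‖ := hxc'n
    -- infDist y C - infDist x C - ⟪v, y-x⟫ ≥ ⟪u,y-x⟫ + ‖x-c'‖ - infDist x C - ⟪v,y-x⟫
    --   ≥ ⟪u - v, y - x⟫
    have : ⟪u, y - x⟫ + ‖x - c'‖ ≤ infDist y C := by rw [h1]; linarith
    linarith
  have hq : 0 ≤ ε / 2 * ‖y - x‖ := by positivity
  rw [Real.norm_eq_abs, abs_le]
  constructor
  · linarith
  · linarith
end
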